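/- arXiv:2311.03143 — 5 statements merged into one kernel-verified Lean document; each statement's English description precedes it below -/
import Mathlib

section
/- Let z₀, z ∈ ℂ and define f(θ) = |z₀ + z e^{jθ}|². Let φ₁, φ₂, φ₃ ∈ ℝ be such that the matrix A with rows (1, cos φₗ, sin φₗ) is invertible, and let y = (f(φ₁), f(φ₂), f(φ₃))ᵀ. Then x := A⁻¹ y equals (|z₀|² + |z|², 2Re(z₀ z̄), 2Im(z₀ z̄))ᵀ, and hence (if z₀ z̄ ≠ 0) θ* = arg(x₂ + j x₃) maximizes f. -/
/-!
The power f(θ) = |z₀ + z e^{jθ}|² is the sinusoid a + b cos θ + c sin θ with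
(a, b, c) = (|z₀|² + |z|², 2 Re w, 2 Im w), w = z₀ z̄, so the three measurements are exactly
A (a, b, c)ᵀ and inverting A recovers the coefficients. Since b cos θ + c sin θ = 2 Re (w e^{-jθ})
is at most 2|w|, with equality at θ = arg w = arg (b + j c), that phase maximizes f.
-/

open Complex Real Matrix
open scoped ComplexConjugate

lemma norm_add_mul_exp_mul_I_sq (z₀ z : ℂ) (θ : ℝ) :
    ‖z₀ + z * exp (θ * I)‖ ^ 2 =
      ‖z₀‖ ^ 2 + ‖z‖ ^ 2 + 2 * (z₀ * conj z).re * Real.cos θ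
        + 2 * (z₀ * conj z).im * Real.sin θ := by
  have hexp : exp (θ * I) = Real.cos θ + Real.sin θ * I := by
    rw [exp_mul_I, ← ofReal_cos, ← ofReal_sin]
  have hrot : ‖z * exp (θ * I)‖ = ‖z‖ := by rw [norm_mul, norm_exp_ofReal_mul_I, mul_one]
  rw [Complex.sq_norm, normSq_add, ← Complex.sq_norm, ← Complex.sq_norm, hrot, map_mul, hexp]
  simp only [map_add, map_mul, conj_ofReal, conj_I, mul_re, mul_im, add_re, add_im, ofReal_re,
    ofReal_im, neg_re, neg_im, I_re, I_im, conj_re, conj_im]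
  ring

lemma re_mul_cos_add_im_mul_sin_le_norm (w : ℂ) (θ : ℝ) :
    w.re * Real.cos θ + w.im * Real.sin θ ≤ ‖w‖ := by
  nlinarith [sq_nonneg (w.re * Real.sin θ - w.im * Real.cos θ), Real.sin_sq_add_cos_sq θ,
    Complex.sq_norm w, Complex.normSq_apply w, norm_nonneg w]

lemma re_mul_cos_arg_add_im_mul_sin_arg (w : ℂ) :
    w.re * Real.cos w.arg + w.im * Real.sin w.arg = ‖w‖ := by
  rw [← Complex.norm_mul_cos_arg, ← Complex.norm_mul_sin_arg]
  linear_combination ‖w‖ * Real.sin_sq_add_cos_sq w.arg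

lemma mulVec_one_cos_sin {ι : Type*} (φ : ι → ℝ) (a b c : ℝ) :
    (Matrix.of fun l i => ![1, Real.cos (φ l), Real.sin (φ l)] i) *ᵥ ![a, b, c] =
      fun l => a + b * Real.cos (φ l) + c * Real.sin (φ l) := by
  ext l
  simp only [mulVec, dotProduct, of_apply, Fin.sum_univ_three, cons_val_zero, cons_val_one,
    cons_val, one_mul]
  ring

theorem stmt_3 (z₀ z : ℂ) (φ : Fin 3 → ℝ)
    (A : Matrix (Fin 3) (Fin 3) ℝ)
    (hA : A = Matrix.of fun l i => ![1, Real.cos (φ l), Real.sin (φ l)] i)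
    (hdet : IsUnit A.det)
    (y : Fin 3 → ℝ)
    (hy : y = fun l => ‖z₀ + z * Complex.exp ((φ l : ℂ) * Complex.I)‖ ^ 2)
    (x : Fin 3 → ℝ) (hx : x = A⁻¹ *ᵥ y) :
    x = ![‖z₀‖ ^ 2 + ‖z‖ ^ 2,
          2 * (z₀ * (starRingEnd ℂ) z).re,
          2 * (z₀ * (starRingEnd ℂ) z).im]
    ∧ (z₀ * (starRingEnd ℂ) z ≠ 0 →
        ∀ θ : ℝ,
          ‖z₀ + z * Complex.exp ((((x 1 : ℝ) + (x 2 : ℝ) * Complex.I).arg : ℂ) * Complex.I)‖ ^ 2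
            ≥ ‖z₀ + z * Complex.exp ((θ : ℂ) * Complex.I)‖ ^ 2) := by
  set w := z₀ * conj z
  have hxw : x = ![‖z₀‖ ^ 2 + ‖z‖ ^ 2, 2 * w.re, 2 * w.im] := by
    have := A.invertibleOfIsUnitDet hdet
    rw [hx]
    refine inv_mulVec_eq_vec ?_
    rw [hy, hA, mulVec_one_cos_sin]
    exact funext fun l => norm_add_mul_exp_mul_I_sq z₀ z (φ l)
  refine ⟨hxw, fun _ θ => ?_⟩
  have harg : ((x 1 : ℂ) + x 2 * I).arg = w.arg := by
    have h2w : ((x 1 : ℂ) + x 2 * I) = ((2 : ℝ) : ℂ) * w := by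
      rw [hxw]
      apply Complex.ext <;> simp
    rw [h2w, arg_real_mul w two_pos]
  rw [harg, norm_add_mul_exp_mul_I_sq, norm_add_mul_exp_mul_I_sq]
  linarith [re_mul_cos_add_im_mul_sin_le_norm w θ, re_mul_cos_arg_add_im_mul_sin_arg w]
end

section
/- With measurement phases φ₁ = 0, φ₂ = π/2, φ₃ = π and y_l = |z₀ + z e^{jφₗ}|² for l = 1,2,3, where z₀ z̄ ≠ 0, the phase θ* = arg(y₁ − y₃ + j(2y₂ − y₁ − y₃)) maximizes θ ↦ |z₀ + z e^{jθ}|². -/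
/-!
Expanding the square, `|z₀ + z e^{jθ}|² = |z₀|² + |z|² + 2 Re(v e^{-jθ})` with `v = z₀ z̄`, which is
largest exactly when `θ = arg v`. The three measurements at phases `0, π/2, π` recover
`y₁ - y₃ + j(2y₂ - y₁ - y₃) = 4v`, a positive multiple of `v`, so its argument is `arg v`.
-/

open Complex Real ComplexConjugate

namespace Complex

lemma re_mul_exp_neg_mul_I_le_norm (v : ℂ) (θ : ℝ) : (v * exp (-θ * I)).re ≤ ‖v‖ :=
  calc (v * exp (-θ * I)).re ≤ ‖v * exp (-θ * I)‖ := re_le_norm _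
    _ = ‖v‖ := by rw [norm_mul, ← ofReal_neg, norm_exp_ofReal_mul_I, mul_one]

lemma re_mul_exp_neg_arg_mul_I (v : ℂ) : (v * exp (-v.arg * I)).re = ‖v‖ := by
  nth_rewrite 1 [← norm_mul_exp_arg_mul_I v]
  rw [mul_assoc, ← exp_add, neg_mul, add_neg_cancel, exp_zero, mul_one, ofReal_re]

lemma norm_add_mul_exp_mul_I_sq (a b : ℂ) (θ : ℝ) :
    ‖a + b * exp (θ * I)‖ ^ 2 = ‖a‖ ^ 2 + ‖b‖ ^ 2 + 2 * (a * conj b * exp (-θ * I)).re := by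
  have hconj : conj (b * exp (θ * I)) = conj b * exp (-θ * I) := by
    rw [map_mul, ← exp_conj, map_mul, conj_ofReal, conj_I, mul_neg, neg_mul]
  have hunit : normSq (exp (θ * I)) = 1 := by
    rw [normSq_eq_norm_sq, norm_exp_ofReal_mul_I, one_pow]
  simp only [← normSq_eq_norm_sq]
  rw [normSq_add, hconj, normSq_mul, hunit, mul_one, mul_assoc]

lemma norm_add_mul_exp_mul_I_sq_le (a b : ℂ) (θ : ℝ) :
    ‖a + b * exp (θ * I)‖ ^ 2 ≤ ‖a + b * exp ((a * conj b).arg * I)‖ ^ 2 := by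
  rw [norm_add_mul_exp_mul_I_sq, norm_add_mul_exp_mul_I_sq, re_mul_exp_neg_arg_mul_I]
  linarith [re_mul_exp_neg_mul_I_le_norm (a * conj b) θ]

lemma three_phase_combination (a b : ℂ) :
    ((‖a + b‖ ^ 2 - ‖a - b‖ ^ 2 : ℝ) : ℂ)
      + ((2 * ‖a + b * I‖ ^ 2 - ‖a + b‖ ^ 2 - ‖a - b‖ ^ 2 : ℝ) : ℂ) * I = 4 * (a * conj b) := by
  simp only [← normSq_eq_norm_sq]
  apply Complex.ext <;> simp [normSq_apply] <;> ring

end Complex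

theorem stmt_4_general (z₀ z : ℂ)
    (y₁ y₂ y₃ : ℝ)
    (h1 : y₁ = ‖z₀ + z * Complex.exp ((0 : ℂ) * Complex.I)‖ ^ 2)
    (h2 : y₂ = ‖z₀ + z * Complex.exp (((Real.pi / 2 : ℝ) : ℂ) * Complex.I)‖ ^ 2)
    (h3 : y₃ = ‖z₀ + z * Complex.exp (((Real.pi : ℝ) : ℂ) * Complex.I)‖ ^ 2) :
    ∀ θ : ℝ,
      ‖z₀ + z * Complex.exp (((((y₁ - y₃ : ℝ) : ℂ) + ((2 * y₂ - y₁ - y₃ : ℝ) : ℂ) * Complex.I).arg : ℂ) * Complex.I)‖ ^ 2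
        ≥ ‖z₀ + z * Complex.exp ((θ : ℂ) * Complex.I)‖ ^ 2 := by
  intro θ
  have hπ2 : exp (((π / 2 : ℝ) : ℂ) * I) = I := by
    rw [ofReal_div, ofReal_ofNat, exp_mul_I, Complex.cos_pi_div_two, Complex.sin_pi_div_two]; ring
  have hπ : exp ((π : ℂ) * I) = -1 := exp_pi_mul_I
  rw [zero_mul, Complex.exp_zero, mul_one] at h1
  rw [hπ2] at h2
  rw [hπ, mul_neg_one, ← sub_eq_add_neg] at h3
  have harg : ((((y₁ - y₃ : ℝ) : ℂ) + ((2 * y₂ - y₁ - y₃ : ℝ) : ℂ) * I).arg) = (z₀ * conj z).arg := by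
    rw [h1, h2, h3, three_phase_combination, ← ofReal_ofNat, arg_real_mul _ (by norm_num)]
  rw [harg]
  exact norm_add_mul_exp_mul_I_sq_le z₀ z θ

theorem stmt_4 (z₀ z : ℂ) (hz : z₀ * (starRingEnd ℂ) z ≠ 0)
    (y₁ y₂ y₃ : ℝ)
    (h1 : y₁ = ‖z₀ + z * Complex.exp ((0 : ℂ) * Complex.I)‖ ^ 2)
    (h2 : y₂ = ‖z₀ + z * Complex.exp (((Real.pi / 2 : ℝ) : ℂ) * Complex.I)‖ ^ 2)
    (h3 : y₃ = ‖z₀ + z * Complex.exp (((Real.pi : ℝ) : ℂ) * Complex.I)‖ ^ 2) :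
    ∀ θ : ℝ,
      ‖z₀ + z * Complex.exp (((((y₁ - y₃ : ℝ) : ℂ) + ((2 * y₂ - y₁ - y₃ : ℝ) : ℂ) * Complex.I).arg : ℂ) * Complex.I)‖ ^ 2
        ≥ ‖z₀ + z * Complex.exp ((θ : ℂ) * Complex.I)‖ ^ 2 :=
  stmt_4_general z₀ z y₁ y₂ y₃ h1 h2 h3
end

section
/- Let 0 ≤ α ≤ 1/2 and M > 0. Then for all x, y with 0 ≤ x ≤ M and 0 ≤ y ≤ M, it holds that α x² + (1−α) y² ≥ x y² / M. -/
theorem stmt_6 (α M : ℝ) (hα₀ : 0 ≤ α) (hα₁ : α ≤ 1 / 2) (hM : 0 < M)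
    (x y : ℝ) (hx₀ : 0 ≤ x) (hxM : x ≤ M) (hy₀ : 0 ≤ y) (hyM : y ≤ M) :
    α * x ^ 2 + (1 - α) * y ^ 2 ≥ x * y ^ 2 / M := by
  rw [ge_iff_le, div_le_iff₀ hM]
  rcases le_or_gt x ((1 - α) * M) with h | h
  · nlinarith [mul_nonneg hα₀ (sq_nonneg x), mul_nonneg (sub_nonneg.2 h) (sq_nonneg y)]
  · have h1 : (1 - α) * M - α * x ≥ 0 := by nlinarith
    have h2 : M ^ 2 - y ^ 2 ≥ 0 := by nlinarith
    nlinarith [mul_nonneg (sub_nonneg.2 hxM) h1, mul_nonneg (sub_nonneg.2 (le_of_lt h)) h2]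
end

section
/- Let L ≥ 3 and let A be the L×3 matrix with rows (1, cos φᵢ, sin φᵢ). If AᵀA is invertible, then trace((AᵀA)⁻¹) ≥ 5/L, with equality if the phases are equally spaced, i.e., φₗ = φ₀ + 2π(l−1)/L for some φ₀. -/
/-!
For a positive definite matrix `M`, testing the quadratic form of `M` on `M⁻¹ eᵢ - eᵢ / Mᵢᵢ`
gives `(M⁻¹)ᵢᵢ ≥ 1 / Mᵢᵢ`, so `trace (M⁻¹) ≥ ∑ 1 / Mᵢᵢ`. For `M = AᵀA` the diagonal is
`L, ∑ cos² φₗ, ∑ sin² φₗ`, and the last two add up to `L`, so by the AM–HM inequality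
`trace (M⁻¹) ≥ 1/L + 4/L`. For equally spaced phases the first and second harmonics sum to zero
over the `L`-th roots of unity, hence `AᵀA = diag (L, L/2, L/2)` and the bound is attained.
-/

open Real Matrix

theorem Matrix.PosDef.inv_diag_le_diag_inv {n : Type*} [Fintype n] [DecidableEq n]
    {M : Matrix n n ℝ} (hM : M.PosDef) (i : n) : (M i i)⁻¹ ≤ M⁻¹ i i := by
  set e : n → ℝ := Pi.single i 1
  set t := (M i i)⁻¹
  set x := M⁻¹ *ᵥ e - t • e
  have hMx : M *ᵥ x = e - t • (M *ᵥ e) := by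
    simp [x, mulVec_sub, mulVec_smul, mulVec_mulVec,
      mul_nonsing_inv _ ((isUnit_iff_isUnit_det M).mp hM.isUnit)]
  have hxM : x ᵥ* M = M *ᵥ x := by
    rw [← mulVec_transpose, ← conjTranspose_eq_transpose_of_trivial, hM.isHermitian.eq]
  have hq : star x ⬝ᵥ (M *ᵥ x) = M⁻¹ i i - t := by
    have hMi : M i i ≠ 0 := hM.diag_pos.ne'
    rw [star_trivial, hMx, dotProduct_sub, dotProduct_smul, dotProduct_mulVec, hxM, hMx]
    simp [x, e, t, hMi]
  linarith [hM.posSemidef.dotProduct_mulVec_nonneg x]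

theorem Matrix.PosDef.sum_inv_diag_le_trace_inv {n : Type*} [Fintype n] [DecidableEq n]
    {M : Matrix n n ℝ} (hM : M.PosDef) : ∑ i, (M i i)⁻¹ ≤ M⁻¹.trace :=
  Finset.sum_le_sum fun i _ => hM.inv_diag_le_diag_inv i

theorem Matrix.posDef_transpose_mul_self_of_isUnit {m n : Type*} [Fintype m] [Fintype n]
    [DecidableEq n] {A : Matrix m n ℝ} (h : IsUnit (Aᵀ * A)) : (Aᵀ * A).PosDef := by
  rw [← conjTranspose_eq_transpose_of_trivial]
  refine PosDef.conjTranspose_mul_self A fun x y hxy => mulVec_injective_iff_isUnit.mpr h ?_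
  simp only [← mulVec_mulVec, hxy]

theorem geom_sum_eq_zero_of_pow_eq_one {R : Type*} [Ring R] [NoZeroDivisors R] {x : R} {n : ℕ}
    (hx : x ≠ 1) (hxn : x ^ n = 1) : ∑ i ∈ Finset.range n, x ^ i = 0 := by
  have := mul_neg_geom_sum x n
  rw [hxn, sub_self] at this
  exact (mul_eq_zero.mp this).resolve_left (sub_ne_zero.mpr hx.symm)

theorem sum_cexp_mul_equally_spaced_eq_zero {L k : ℕ} (hk : 0 < k) (hkL : k < L) (θ : ℝ) :
    ∑ l : Fin L, Complex.exp (↑(k * (θ + 2 * π * l / L)) * Complex.I) = 0 := by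
  have hL : L ≠ 0 := by omega
  set ζ := Complex.exp (2 * π * Complex.I / L)
  have hζ : IsPrimitiveRoot ζ L := Complex.isPrimitiveRoot_exp L hL
  have hterm : ∀ l : ℕ, Complex.exp (↑(k * (θ + 2 * π * l / L)) * Complex.I)
      = Complex.exp (↑(k * θ) * Complex.I) * (ζ ^ k) ^ l := by
    intro l
    rw [← pow_mul, ← Complex.exp_nat_mul, ← Complex.exp_add]
    push_cast
    congr 1
    field_simp
  rw [Fin.sum_univ_eq_sum_range (fun l => Complex.exp (↑(k * (θ + 2 * π * l / L)) * Complex.I)),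
    Finset.sum_congr rfl fun l _ => hterm l, ← Finset.mul_sum,
    geom_sum_eq_zero_of_pow_eq_one (hζ.pow_ne_one_of_pos_of_lt hk.ne' hkL)
      (by rw [← pow_mul, mul_comm, pow_mul, hζ.pow_eq_one, one_pow]), mul_zero]

theorem sum_cos_mul_equally_spaced_eq_zero {L k : ℕ} (hk : 0 < k) (hkL : k < L) (θ : ℝ) :
    ∑ l : Fin L, cos (k * (θ + 2 * π * l / L)) = 0 := by
  simpa only [Complex.re_sum, Complex.exp_ofReal_mul_I_re, Complex.zero_re] using
    congrArg Complex.re (sum_cexp_mul_equally_spaced_eq_zero hk hkL θ)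

theorem sum_sin_mul_equally_spaced_eq_zero {L k : ℕ} (hk : 0 < k) (hkL : k < L) (θ : ℝ) :
    ∑ l : Fin L, sin (k * (θ + 2 * π * l / L)) = 0 := by
  simpa only [Complex.im_sum, Complex.exp_ofReal_mul_I_im, Complex.zero_im] using
    congrArg Complex.im (sum_cexp_mul_equally_spaced_eq_zero hk hkL θ)

noncomputable def phaseMatrix {L : ℕ} (φ : Fin L → ℝ) : Matrix (Fin L) (Fin 3) ℝ :=
  Matrix.of fun l i => ![1, cos (φ l), sin (φ l)] i

theorem transpose_mul_self_phaseMatrix {L : ℕ} (φ : Fin L → ℝ) :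
    (phaseMatrix φ)ᵀ * phaseMatrix φ =
      !![(L : ℝ), ∑ l, cos (φ l), ∑ l, sin (φ l);
        ∑ l, cos (φ l), ∑ l, cos (φ l) ^ 2, ∑ l, cos (φ l) * sin (φ l);
        ∑ l, sin (φ l), ∑ l, cos (φ l) * sin (φ l), ∑ l, sin (φ l) ^ 2] := by
  ext i j
  fin_cases i <;> fin_cases j <;> simp [phaseMatrix, mul_apply, sq, mul_comm]

theorem sum_cos_sq_add_sum_sin_sq {L : ℕ} (φ : Fin L → ℝ) :
    ∑ l, cos (φ l) ^ 2 + ∑ l, sin (φ l) ^ 2 = L := by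
  simp [← Finset.sum_add_distrib]

theorem transpose_mul_self_phaseMatrix_of_equally_spaced {L : ℕ} (hL : 3 ≤ L) {φ : Fin L → ℝ}
    {φ₀ : ℝ} (hφ : ∀ l : Fin L, φ l = φ₀ + 2 * π * l / L) :
    (phaseMatrix φ)ᵀ * phaseMatrix φ = diagonal ![(L : ℝ), L / 2, L / 2] := by
  have harmonic (k : ℕ) (hk : 0 < k) (hkL : k < L) :
      ∑ l, cos (k * φ l) = 0 ∧ ∑ l, sin (k * φ l) = 0 := by
    simp only [hφ]
    exact ⟨sum_cos_mul_equally_spaced_eq_zero hk hkL φ₀,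
      sum_sin_mul_equally_spaced_eq_zero hk hkL φ₀⟩
  obtain ⟨hcos, hsin⟩ := harmonic 1 one_pos (by omega)
  obtain ⟨hcos2, hsin2⟩ := harmonic 2 two_pos (by omega)
  simp only [Nat.cast_one, one_mul] at hcos hsin
  push_cast at hcos2 hsin2
  have hcs : ∑ l, cos (φ l) * sin (φ l) = 0 := by
    have hdouble (x : ℝ) : cos x * sin x = sin (2 * x) / 2 := by rw [sin_two_mul]; ring
    simp only [hdouble, ← Finset.sum_div, hsin2, zero_div]
  have hcc : ∑ l, cos (φ l) ^ 2 = L / 2 := by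
    simp only [cos_sq, Finset.sum_add_distrib, ← Finset.sum_div, hcos2]
    simp [div_eq_mul_inv]
  have hss : ∑ l, sin (φ l) ^ 2 = L / 2 := by
    linarith [sum_cos_sq_add_sum_sin_sq φ]
  rw [transpose_mul_self_phaseMatrix, hcos, hsin, hcs, hcc, hss]
  ext i j
  fin_cases i <;> fin_cases j <;> simp

theorem stmt_8 (L : ℕ) (hL : 3 ≤ L) (φ : Fin L → ℝ)
    (A : Matrix (Fin L) (Fin 3) ℝ)
    (hA : A = Matrix.of fun l i => ![1, Real.cos (φ l), Real.sin (φ l)] i)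
    (hinv : IsUnit (Aᵀ * A)) :
    (Aᵀ * A)⁻¹.trace ≥ 5 / L ∧
    ((∃ φ₀ : ℝ, ∀ l : Fin L, φ l = φ₀ + 2 * Real.pi * l / L) →
      (Aᵀ * A)⁻¹.trace = 5 / L) := by
  obtain rfl : A = phaseMatrix φ := hA
  refine ⟨?_, fun ⟨φ₀, hφ⟩ => ?_⟩
  · set M := (phaseMatrix φ)ᵀ * phaseMatrix φ
    set p := ∑ l, cos (φ l) ^ 2
    set s := ∑ l, sin (φ l) ^ 2
    have hdiag : M 0 0 = L ∧ M 1 1 = p ∧ M 2 2 = s := by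
      simp [M, p, s, transpose_mul_self_phaseMatrix]
    have hM := posDef_transpose_mul_self_of_isUnit hinv
    have hp : 0 < p := hdiag.2.1 ▸ hM.diag_pos
    have hs : 0 < s := hdiag.2.2 ▸ hM.diag_pos
    have hps : p + s = L := sum_cos_sq_add_sum_sin_sq φ
    have hAMHM : 4 / (p + s) ≤ p⁻¹ + s⁻¹ := by
      rw [inv_add_inv hp.ne' hs.ne', div_le_div_iff₀ (by positivity) (by positivity)]
      nlinarith [sq_nonneg (p - s)]
    calc 5 / (L : ℝ) = (L : ℝ)⁻¹ + 4 / (p + s) := by rw [hps]; ring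
      _ ≤ (M 0 0)⁻¹ + (M 1 1)⁻¹ + (M 2 2)⁻¹ := by rw [hdiag.1, hdiag.2.1, hdiag.2.2]; linarith
      _ = ∑ i, (M i i)⁻¹ := (Fin.sum_univ_three fun i => (M i i)⁻¹).symm
      _ ≤ M⁻¹.trace := hM.sum_inv_diag_le_trace_inv
  · have hL0 : (L : ℝ) ≠ 0 := by positivity
    rw [transpose_mul_self_phaseMatrix_of_equally_spaced hL hφ,
      inv_eq_left_inv (B := diagonal ![(L : ℝ)⁻¹, 2 / L, 2 / L]), trace_diagonal,
      Fin.sum_univ_three]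
    · simp
      ring
    · rw [diagonal_mul_diagonal, ← diagonal_one]
      congr 1
      ext i
      fin_cases i <;> simp [hL0]
end

section
/- Suppose z₁,…,z_N ∈ ℂ are all nonzero, and for each n define uₙ = ∑_{i≠n} zᵢ. If for every 1 ≤ n ≤ N, uₙ ≠ 0 and Arg(zₙ) = Arg(uₙ), then Arg(z₁) = Arg(z₂) = … = Arg(z_N). -/
open Complex Finset

theorem stmt_13 (N : ℕ) (z : Fin N → ℂ) (hz : ∀ n, z n ≠ 0)
    (u : Fin N → ℂ) (hu : ∀ n, u n = ∑ i ∈ Finset.univ.erase n, z i)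
    (hune : ∀ n, u n ≠ 0)
    (harg : ∀ n, (z n).arg = (u n).arg) :
    ∀ m n : Fin N, (z m).arg = (z n).arg := by
  have key : ∀ n, (z n).arg = (∑ i, z i).arg := by
    intro n
    have hsr : SameRay ℝ (z n) (u n) :=
      Complex.sameRay_iff.mpr (Or.inr (Or.inr (harg n)))
    obtain ⟨r, hr, hru⟩ := hsr.exists_pos_left (hz n) (hune n)
    have hsum : (∑ i, z i) = ((1 + r : ℝ) : ℂ) * z n := by
      rw [← Finset.add_sum_erase _ _ (Finset.mem_univ n), ← hu n, ← hru]
      push_cast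
      simp [smul_eq_mul]
      ring
    rw [hsum, Complex.arg_real_mul _ (by linarith)]
  intro m n
  rw [key m, key n]
end
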